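/- Fix N ≥ 1, M ≥ 1, κ_0 > 0, d_0 > 0 with (N−1)κ_0 < M·d_0 < N·κ_0. Let C : ℝ → ℝ be convex, continuously differentiable, strictly increasing on [0,∞) with C' ≥ c_0 > 0. Fix θ_d ∈ ℝ_+^M, θ_s^{-i} ∈ ℝ_+^{N−1} and write A := Σθ_d + Σθ_s^{-i} ≥ 0. Then the supplier payoff π(θ) := p(θ)·κ_0 − θ − C(κ_0 − θ/p(θ)), with p(θ) = (A + θ)/(Nκ_0 − Md_0), has derivative π'(θ) = κ_0/(Nκ_0 − Md_0) − 1 + (Nκ_0 − Md_0)·C'(κ_0 − θ/p(θ))·A/(A+θ)², and, since the firm faces the residual inelastic demand Md_0 − (N−1)κ_0 > 0, π(θ) → ∞ as θ → ∞; in particular π is not bounded above on θ ∈ [0, ∞). -/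

import Mathlib

open Finset Filter Topology

theorem pivotal_supplier_unbounded_payoff
    (N M : ℕ) (hN : 1 ≤ N) (hM : 1 ≤ M)
    (κ0 d0 : ℝ) (hκ0 : 0 < κ0) (hd0 : 0 < d0)
    (hpivotal : ((N : ℝ) - 1) * κ0 < (M : ℝ) * d0)
    (hcap : (M : ℝ) * d0 < (N : ℝ) * κ0)
    (C : ℝ → ℝ) (hconv : ConvexOn ℝ Set.univ C) (hC1 : ContDiff ℝ 1 C)
    (hmono : StrictMonoOn C (Set.Ici (0 : ℝ)))
    (c0 : ℝ) (hc0 : 0 < c0) (hC' : ∀ s : ℝ, 0 ≤ s → c0 ≤ deriv C s)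
    (θd : Fin M → ℝ) (θsOther : Fin (N - 1) → ℝ)
    (hθd : ∀ i, 0 ≤ θd i) (hθs : ∀ i, 0 ≤ θsOther i)
    (A : ℝ) (hA : A = (∑ i, θd i) + (∑ i, θsOther i))
    (ζ : ℝ) (hζ : ζ = (N : ℝ) * κ0 - (M : ℝ) * d0)
    (π : ℝ → ℝ)
    (hπ : π = fun θ => ((A + θ) / ζ) * κ0 - θ - C (κ0 - θ / ((A + θ) / ζ))) :
    (∀ θ : ℝ, 0 ≤ θ → 0 < A + θ →
      HasDerivAt π
        (κ0 / ζ - 1 + ζ * deriv C (κ0 - θ * ζ / (A + θ)) * A / (A + θ) ^ 2) θ) ∧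
    Tendsto π atTop atTop := by
  have hζ0 : 0 < ζ := by rw [hζ]; linarith
  have hζκ : ζ < κ0 := by rw [hζ]; nlinarith
  have hCdiff : Differentiable ℝ C := hC1.differentiable one_ne_zero
  -- rewrite π without nested division
  have hπ' : π = fun θ => ((A + θ) / ζ) * κ0 - θ - C (κ0 - θ * ζ / (A + θ)) := by
    rw [hπ]; funext θ; rw [div_div_eq_mul_div]
  constructor
  · intro θ hθ hAθ
    have hne : A + θ ≠ 0 := ne_of_gt hAθ
    have h1 : HasDerivAt (fun θ : ℝ => ((A + θ) / ζ) * κ0) (κ0 / ζ) θ := by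
      have : HasDerivAt (fun θ : ℝ => ((A + θ) / ζ) * κ0) ((1 / ζ) * κ0) θ := by
        exact (((hasDerivAt_id θ).const_add A).div_const ζ).mul_const κ0
      simpa [one_div, div_eq_mul_inv, mul_comm] using this
    have hg : HasDerivAt (fun θ : ℝ => κ0 - θ * ζ / (A + θ))
        (-(ζ * A / (A + θ) ^ 2)) θ := by
      have hdiv := ((hasDerivAt_id θ).mul_const ζ).fun_div ((hasDerivAt_id θ).const_add A) hne
      simp only [id_eq, one_mul, mul_one] at hdiv
      have := (hasDerivAt_const θ κ0).fun_sub hdiv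
      refine this.congr_deriv ?_
      field_simp
      ring
    have hCg : HasDerivAt (fun θ : ℝ => C (κ0 - θ * ζ / (A + θ)))
        (deriv C (κ0 - θ * ζ / (A + θ)) * (-(ζ * A / (A + θ) ^ 2))) θ :=
      (hCdiff.differentiableAt.hasDerivAt).comp θ hg
    have := (h1.fun_sub (hasDerivAt_id θ)).fun_sub hCg
    rw [hπ']
    refine this.congr_deriv ?_
    ring
  · rw [hπ']
    have hargs : Tendsto (fun θ : ℝ => κ0 - θ * ζ / (A + θ)) atTop (𝓝 (κ0 - ζ)) := by
      have h0 : Tendsto (fun θ : ℝ => ζ * A / (A + θ)) atTop (𝓝 0) :=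
        Tendsto.div_atTop tendsto_const_nhds
          (tendsto_atTop_add_const_left _ A tendsto_id)
      have heq : ∀ᶠ θ : ℝ in atTop,
          κ0 - ζ + ζ * A / (A + θ) = κ0 - θ * ζ / (A + θ) := by
        filter_upwards [eventually_gt_atTop (|A| + 1)] with θ hθ
        have hne : A + θ ≠ 0 := by
          have := abs_nonneg A
          have := neg_abs_le A
          nlinarith
        field_simp
        ring
      have : Tendsto (fun θ : ℝ => κ0 - ζ + ζ * A / (A + θ)) atTop (𝓝 (κ0 - ζ + 0)) :=
        tendsto_const_nhds.add h0
      rw [add_zero] at this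
      exact this.congr' heq
    have hCt : Tendsto (fun θ : ℝ => C (κ0 - θ * ζ / (A + θ))) atTop (𝓝 (C (κ0 - ζ))) :=
      (hC1.continuous.continuousAt.tendsto).comp hargs
    have hlin : Tendsto (fun θ : ℝ => (κ0 / ζ - 1) * θ + A * κ0 / ζ) atTop atTop := by
      apply tendsto_atTop_add_const_right
      apply Tendsto.const_mul_atTop _ tendsto_id
      have : 1 < κ0 / ζ := (one_lt_div hζ0).2 hζκ
      linarith
    have := hlin.atTop_add hCt.neg
    refine this.congr fun θ => ?_
    ring
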